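/- arXiv:1806.09626 — 2 statements merged into one kernel-verified Lean document; each statement's English description precedes it below -/
import Mathlib

section
/- The coarse-graining of a Motzkin walk is a Motzkin walk: if h : {0,...,2n} → ℕ are the heights of a Motzkin walk of length 2n, then h'(l) := ⌊h(2l)/2⌋ for l ∈ {0,...,n} defines the heights of a Motzkin walk of length n (i.e., h' is nonnegative, h'(0) = h'(n) = 0, and consecutive values differ by at most 1). -/
/-- Coarse-graining a Motzkin walk yields a Motzkin walk: if `h` are the heights of a
Motzkin walk of length `2n`, then `h'(l) = ⌊h(2l)/2⌋` are the heights of a Motzkin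
walk of length `n`. -/
theorem coarse_grain_is_motzkin (n : ℕ) (h : ℕ → ℕ)
    (h0 : h 0 = 0) (hend : h (2 * n) = 0)
    (hstep : ∀ x < 2 * n, ((h (x + 1) : ℤ) - h x) ∈ ({-1, 0, 1} : Set ℤ)) :
    (fun l => h (2 * l) / 2) 0 = 0 ∧
    (fun l => h (2 * l) / 2) n = 0 ∧
    ∀ l < n, (((h (2 * (l + 1)) / 2 : ℕ) : ℤ) - ((h (2 * l) / 2 : ℕ) : ℤ))
      ∈ ({-1, 0, 1} : Set ℤ) := by
  refine ⟨by simp [h0], by simp [hend], ?_⟩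
  intro l hl
  have s1 := hstep (2 * l) (by omega)
  have s2 := hstep (2 * l + 1) (by omega)
  have e : 2 * (l + 1) = 2 * l + 1 + 1 := by ring
  rw [e]
  simp only [Set.mem_insert_iff, Set.mem_singleton_iff] at s1 s2 ⊢
  omega
end

section
/- Bijection between Motzkin walks and spin-z strings of total magnetization zero count: the number of sequences of length 2n over {-1,0,1} with total sum k equals Σ_j binom(2n, j)·binom(2n − j, j + k) summed over valid j, and for p, q with min(p,q) ≥ n and q − p = k, this equals the number of admissible nonnegative walks from height p to height q. -/
open Finset

lemma inner_count (m : ℕ) (k : ℤ) (A : Finset (Fin m)) :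
    (univ.filter (fun B : Finset (Fin m) =>
        Disjoint A B ∧ (B.card : ℤ) - A.card = k)).card
      = if 0 ≤ (A.card : ℤ) + k then (m - A.card).choose (((A.card : ℤ) + k).toNat) else 0 := by
  split_ifs with h
  · have heq : (univ.filter (fun B : Finset (Fin m) =>
        Disjoint A B ∧ (B.card : ℤ) - A.card = k))
        = Aᶜ.powersetCard (((A.card : ℤ) + k).toNat) := by
      ext B
      simp only [mem_filter, mem_univ, true_and, mem_powersetCard,
        le_compl_iff_disjoint_left]
      have hBA : B ⊆ Aᶜ ↔ Disjoint A B :=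
        ⟨fun hs => Finset.disjoint_left.2 fun a hA hB => (Finset.mem_compl.1 (hs hB)) hA,
         fun hd a ha => Finset.mem_compl.2 fun hA => Finset.disjoint_left.1 hd hA ha⟩
      constructor
      · rintro ⟨hd, hc⟩; exact ⟨hd, by omega⟩
      · rintro ⟨hs, hc⟩; exact ⟨hs, by omega⟩
    rw [heq, card_powersetCard, card_compl, Fintype.card_fin]
  · rw [Finset.card_eq_zero, Finset.filter_eq_empty_iff]
    intro B _
    rintro ⟨-, hc⟩
    have := B.card.cast_nonneg (α := ℤ)
    omega

lemma pair_count (m : ℕ) (k : ℤ) :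
    (univ.filter (fun AB : Finset (Fin m) × Finset (Fin m) =>
        Disjoint AB.1 AB.2 ∧ (AB.2.card : ℤ) - AB.1.card = k)).card
      = ∑ j ∈ (range (m + 1)).filter (fun j : ℕ => 0 ≤ (j : ℤ) + k),
          m.choose j * (m - j).choose (((j : ℤ) + k).toNat) := by
  classical
  have h1 : (univ.filter (fun AB : Finset (Fin m) × Finset (Fin m) =>
        Disjoint AB.1 AB.2 ∧ (AB.2.card : ℤ) - AB.1.card = k)).card
      = ∑ A : Finset (Fin m), (univ.filter (fun B : Finset (Fin m) =>
          Disjoint A B ∧ (B.card : ℤ) - A.card = k)).card := by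
    rw [Finset.card_filter]
    rw [← Finset.univ_product_univ, Finset.sum_product]
    exact Finset.sum_congr rfl fun A _ => (Finset.card_filter _ _).symm
  rw [h1]
  have h2 : ∀ A : Finset (Fin m), (univ.filter (fun B : Finset (Fin m) =>
          Disjoint A B ∧ (B.card : ℤ) - A.card = k)).card
      = if 0 ≤ (A.card : ℤ) + k then (m - A.card).choose (((A.card : ℤ) + k).toNat) else 0 :=
    inner_count m k
  simp only [h2]
  rw [← Finset.powerset_univ, Finset.sum_powerset]
  rw [Finset.sum_filter]
  rw [Finset.card_univ, Fintype.card_fin]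
  refine Finset.sum_congr rfl fun j hj => ?_
  have : ∀ A ∈ Finset.univ.powersetCard j (α := Fin m),
      (if 0 ≤ (A.card : ℤ) + k then (m - A.card).choose (((A.card : ℤ) + k).toNat) else 0)
      = (if 0 ≤ (j : ℤ) + k then (m - j).choose (((j : ℤ) + k).toNat) else 0) := by
    intro A hA
    rw [(Finset.mem_powersetCard.1 hA).2]
  rw [Finset.sum_congr rfl this, Finset.sum_const, Finset.card_powersetCard,
    Finset.card_univ, Fintype.card_fin, smul_eq_mul]
  split_ifs with h
  · rfl
  · exact mul_zero _

lemma sum_eq_cards (m : ℕ) (s : Fin m → ℤ) (hs : ∀ i, s i ∈ ({-1, 0, 1} : Set ℤ)) :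
    ∑ i, s i = ((univ.filter (fun i => s i = 1)).card : ℤ)
      - ((univ.filter (fun i => s i = -1)).card : ℤ) := by
  rw [← Finset.sum_boole, ← Finset.sum_boole, ← Finset.sum_sub_distrib]
  refine Finset.sum_congr rfl fun i _ => ?_
  have h := hs i
  simp only [Set.mem_insert_iff, Set.mem_singleton_iff] at h
  rcases h with h | h | h <;> rw [h] <;> norm_num

lemma filt_one (m : ℕ) (A B : Finset (Fin m)) :
    univ.filter (fun i => (if i ∈ B then (1:ℤ) else if i ∈ A then -1 else 0) = 1) = B := by
  ext i
  simp only [mem_filter, mem_univ, true_and]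
  split_ifs with h h'
  · simp [h]
  · norm_num [h]
  · norm_num [h]

lemma filt_negone (m : ℕ) (A B : Finset (Fin m)) (hd : Disjoint A B) :
    univ.filter (fun i => (if i ∈ B then (1:ℤ) else if i ∈ A then -1 else 0) = -1) = A := by
  ext i
  simp only [mem_filter, mem_univ, true_and]
  split_ifs with h h'
  · constructor
    · intro he; exact absurd he (by norm_num)
    · intro hA; exact absurd h (Finset.disjoint_left.1 hd hA)
  · norm_num [h']
  · norm_num [h']

noncomputable def seqEquivPair (m : ℕ) (k : ℤ) :
    {s : Fin m → ℤ // (∀ i, s i ∈ ({-1, 0, 1} : Set ℤ)) ∧ ∑ i, s i = k}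
      ≃ {AB : Finset (Fin m) × Finset (Fin m) //
          Disjoint AB.1 AB.2 ∧ (AB.2.card : ℤ) - AB.1.card = k} where
  toFun s := ⟨(univ.filter (fun i => s.1 i = -1), univ.filter (fun i => s.1 i = 1)), by
    constructor
    · rw [Finset.disjoint_left]
      intro a ha hb
      simp only [mem_filter] at ha hb
      omega
    · rw [← sum_eq_cards m s.1 s.2.1, s.2.2]⟩
  invFun AB := ⟨fun i => if i ∈ AB.1.2 then 1 else if i ∈ AB.1.1 then -1 else 0, by
    have hvals : ∀ i, (if i ∈ AB.1.2 then (1:ℤ) else if i ∈ AB.1.1 then -1 else 0)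
        ∈ ({-1, 0, 1} : Set ℤ) := fun i => by split_ifs <;> simp
    refine ⟨hvals, ?_⟩
    rw [sum_eq_cards m _ hvals, filt_one m AB.1.1 AB.1.2,
      filt_negone m AB.1.1 AB.1.2 AB.2.1, AB.2.2]⟩
  left_inv s := by
    apply Subtype.ext
    funext i
    simp only
    have h := s.2.1 i
    simp only [Set.mem_insert_iff, Set.mem_singleton_iff] at h
    rcases h with h | h | h <;>
      simp only [mem_filter, mem_univ, true_and, h] <;> norm_num
  right_inv AB := by
    apply Subtype.ext
    apply Prod.ext
    · exact filt_negone m AB.1.1 AB.1.2 AB.2.1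
    · exact filt_one m AB.1.1 AB.1.2

lemma card_filter_val_lt (m x : ℕ) :
    (univ.filter (fun i : Fin m => (i : ℕ) < x)).card = min x m := by
  rw [← Finset.card_range (min x m)]
  apply Finset.card_bij (fun (a : Fin m) _ => (a : ℕ))
  · intro a ha
    simp only [mem_filter, mem_univ, true_and] at ha
    simp only [mem_range]
    exact lt_min ha a.isLt
  · intro a _ b _ h
    exact Fin.ext h
  · intro b hb
    simp only [mem_range, lt_min_iff] at hb
    exact ⟨⟨b, hb.2⟩, by simp [hb.1], rfl⟩

lemma walk_nonneg (n : ℕ) (k : ℤ) (p q : ℕ) (hmin : n ≤ min p q)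
    (hpq : (q : ℤ) - p = k) (s : Fin (2 * n) → ℤ)
    (hv : ∀ i, s i ∈ ({-1, 0, 1} : Set ℤ)) (hsum : ∑ i, s i = k) (x : ℕ) :
    0 ≤ (p : ℤ) + ∑ i ∈ univ.filter (fun i : Fin (2 * n) => (i : ℕ) < x), s i := by
  set F := univ.filter (fun i : Fin (2 * n) => (i : ℕ) < x) with hF
  set G := univ.filter (fun i : Fin (2 * n) => ¬ (i : ℕ) < x) with hG
  have hvals : ∀ i : Fin (2 * n), -1 ≤ s i ∧ s i ≤ 1 := by
    intro i
    have h := hv i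
    simp only [Set.mem_insert_iff, Set.mem_singleton_iff] at h
    rcases h with h | h | h <;> rw [h] <;> norm_num
  have h1 : -(F.card : ℤ) ≤ ∑ i ∈ F, s i := by
    have := Finset.card_nsmul_le_sum F s (-1) (fun i _ => (hvals i).1)
    simpa using this
  have h2 : ∑ i ∈ G, s i ≤ (G.card : ℤ) := by
    have := Finset.sum_le_card_nsmul G s 1 (fun i _ => (hvals i).2)
    simpa using this
  have h3 : ∑ i ∈ F, s i + ∑ i ∈ G, s i = k := by
    rw [Finset.sum_filter_add_sum_filter_not, hsum]
  have h4 : F.card = min x (2 * n) := card_filter_val_lt (2 * n) x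
  have h5 : F.card + G.card = 2 * n := by
    have := Finset.card_filter_add_card_filter_not
      (s := (univ : Finset (Fin (2 * n)))) (p := fun i => (i : ℕ) < x)
    simpa [hF, hG] using this
  have hp : n ≤ p := le_trans hmin (min_le_left _ _)
  have hq : n ≤ q := le_trans hmin (min_le_right _ _)
  omega

/-- The number of length-`2n` sequences over `{-1,0,1}` with total sum `k` equals
`∑_j binom(2n, j)·binom(2n−j, j+k)` over valid `j`, and for `p, q` with
`min(p,q) ≥ n` and `q − p = k` it equals the number of admissible nonnegative walks
from height `p` to height `q`. -/
theorem magnetization_sector_count (n : ℕ) (k : ℤ) (p q : ℕ)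
    (hmin : n ≤ min p q) (hpq : (q : ℤ) - p = k) :
    Nat.card {s : Fin (2 * n) → ℤ //
        (∀ i, s i ∈ ({-1, 0, 1} : Set ℤ)) ∧ ∑ i, s i = k}
      = ∑ j ∈ (Finset.range (2 * n + 1)).filter (fun j : ℕ => 0 ≤ (j : ℤ) + k),
          Nat.choose (2 * n) j * Nat.choose (2 * n - j) (((j : ℤ) + k).toNat) ∧
    Nat.card {s : Fin (2 * n) → ℤ //
        (∀ i, s i ∈ ({-1, 0, 1} : Set ℤ)) ∧ ∑ i, s i = k}
      = Nat.card {s : Fin (2 * n) → ℤ //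
          (∀ i, s i ∈ ({-1, 0, 1} : Set ℤ)) ∧
          (∀ x : ℕ, 0 ≤ (p : ℤ) +
            ∑ i ∈ Finset.univ.filter (fun i : Fin (2 * n) => (i : ℕ) < x), s i) ∧
          (p : ℤ) + ∑ i, s i = q} := by
  constructor
  · rw [Nat.card_congr (seqEquivPair (2 * n) k), Nat.card_eq_fintype_card,
      Fintype.card_subtype, pair_count]
  · refine Nat.card_congr (Equiv.subtypeEquivRight fun s => ?_)
    constructor
    · rintro ⟨hv, hs⟩
      exact ⟨hv, walk_nonneg n k p q hmin hpq s hv hs, by omega⟩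
    · rintro ⟨hv, -, hs⟩
      exact ⟨hv, by omega⟩
end
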